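/- arXiv:1306.4891 — 2 statements merged into one kernel-verified Lean document; each statement's English description precedes it below -/
import Mathlib

section
/- limsup_{N→∞} |∑_{n=1}^{N} D(n) − 2^{N+1}| / 2^{N/2} = √2 and liminf_{N→∞} |∑_{n=1}^{N} D(n) − 2^{N+1}| / 2^{N/2} = 1, where 2^{N/2} denotes the real number 2 raised to the power N/2. -/
/-- `f n` is the number of nonempty relatively prime subsets of `{1, ..., n}`. -/
def f (n : ℕ) : ℕ :=
  ((Finset.Icc 1 n).powerset.filter fun A => A.Nonempty ∧ A.gcd id = 1).card

/-- `D n = ∑_{d ∣ n} f d` is the divisor sum of `f`. -/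
def D (n : ℕ) : ℕ := ∑ d ∈ n.divisors, f d

open Finset Filter


lemma card_mult (n d : ℕ) : ((Finset.Icc 1 n).filter (fun x => d ∣ x)).card = n / d := by
  rw [show Finset.Icc 1 n = Finset.Ioc 0 n by rfl]
  exact Nat.Ioc_filter_dvd_card_eq_div n d

lemma fU (n : ℕ) : f n + 2 ^ (n / 2) ≤ 2 ^ n := by
  classical
  set s := Finset.Icc 1 n with hs
  set E := s.filter (fun x => 2 ∣ x) with hE
  have hEcard : E.card = n / 2 := card_mult n 2
  have hdisj : Disjoint (s.powerset.filter fun A => A.Nonempty ∧ A.gcd id = 1) E.powerset := by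
    rw [Finset.disjoint_left]
    rintro A hA hA'
    simp only [Finset.mem_filter, Finset.mem_powerset] at hA hA'
    obtain ⟨-, hne, hgcd⟩ := hA
    have h2 : 2 ∣ A.gcd id := by
      apply Finset.dvd_gcd
      intro b hb
      have := hA' hb
      rw [hE, Finset.mem_filter] at this
      exact this.2
    omega
  have hsub : (s.powerset.filter fun A => A.Nonempty ∧ A.gcd id = 1) ∪ E.powerset ⊆ s.powerset := by
    apply Finset.union_subset (Finset.filter_subset _ _)
    exact Finset.powerset_mono.2 (Finset.filter_subset _ _)
  have := Finset.card_le_card hsub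
  rw [Finset.card_union_of_disjoint hdisj, Finset.card_powerset, Finset.card_powerset, hEcard] at this
  simpa [f, hs, Nat.card_Icc] using this

lemma fL (n : ℕ) : 2 ^ n ≤ f n + 2 ^ (n / 2) + n * 2 ^ (n / 3) + 1 := by
  classical
  set s := Finset.Icc 1 n with hs
  have htot : f n + (s.powerset.filter fun A => ¬(A.Nonempty ∧ A.gcd id = 1)).card = 2 ^ n := by
    rw [f, Finset.card_filter_add_card_filter_not, Finset.card_powerset, Nat.card_Icc]
    norm_num
  -- bad sets classified by gcd
  have hbad : (s.powerset.filter fun A => ¬(A.Nonempty ∧ A.gcd id = 1)) ⊆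
      insert (∅ : Finset ℕ) ((Finset.Icc 2 n).biUnion fun d => (s.filter (fun x => d ∣ x)).powerset) := by
    intro A hA
    simp only [Finset.mem_filter, Finset.mem_powerset] at hA
    obtain ⟨hAs, hA2⟩ := hA
    rcases A.eq_empty_or_nonempty with h | hne
    · simp [h]
    · have hgcd : A.gcd id ≠ 1 := fun h => hA2 ⟨hne, h⟩
      obtain ⟨a, ha⟩ := hne
      have has : a ∈ s := hAs ha
      rw [hs, Finset.mem_Icc] at has
      have hdvd : A.gcd id ∣ a := Finset.gcd_dvd ha
      have hpos : 0 < A.gcd id := Nat.pos_of_dvd_of_pos hdvd (by omega)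
      have hle : A.gcd id ≤ n := le_trans (Nat.le_of_dvd (by omega) hdvd) has.2
      apply Finset.mem_insert_of_mem
      rw [Finset.mem_biUnion]
      refine ⟨A.gcd id, by rw [Finset.mem_Icc]; omega, ?_⟩
      rw [Finset.mem_powerset]
      intro b hb
      rw [Finset.mem_filter]
      exact ⟨hAs hb, Finset.gcd_dvd hb⟩
  have hcard : (s.powerset.filter fun A => ¬(A.Nonempty ∧ A.gcd id = 1)).card ≤
      1 + ∑ d ∈ Finset.Icc 2 n, 2 ^ (n / d) := by
    calc _ ≤ (insert (∅ : Finset ℕ) ((Finset.Icc 2 n).biUnion fun d => (s.filter (fun x => d ∣ x)).powerset)).card :=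
          Finset.card_le_card hbad
      _ ≤ 1 + ((Finset.Icc 2 n).biUnion fun d => (s.filter (fun x => d ∣ x)).powerset).card :=
          (Finset.card_insert_le _ _).trans (by omega)
      _ ≤ 1 + ∑ d ∈ Finset.Icc 2 n, 2 ^ (n / d) := by
          gcongr
          calc _ ≤ ∑ d ∈ Finset.Icc 2 n, ((s.filter (fun x => d ∣ x)).powerset).card :=
                Finset.card_biUnion_le
            _ = ∑ d ∈ Finset.Icc 2 n, 2 ^ (n / d) := by
                apply Finset.sum_congr rfl
                intro d _
                rw [Finset.card_powerset, card_mult]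
  have hsum : ∑ d ∈ Finset.Icc 2 n, 2 ^ (n / d) ≤ 2 ^ (n / 2) + n * 2 ^ (n / 3) := by
    rcases le_or_gt n 1 with h | h
    · interval_cases n <;> simp
    · rw [show Finset.Icc 2 n = insert 2 (Finset.Icc 3 n) by
        ext x; simp only [Finset.mem_Icc, Finset.mem_insert]; omega]
      rw [Finset.sum_insert (by simp)]
      have h3 : ∑ d ∈ Finset.Icc 3 n, 2 ^ (n / d) ≤ (n - 2) * 2 ^ (n / 3) := by
        calc ∑ d ∈ Finset.Icc 3 n, 2 ^ (n / d) ≤ ∑ d ∈ Finset.Icc 3 n, 2 ^ (n / 3) := by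
              apply Finset.sum_le_sum
              intro d hd
              rw [Finset.mem_Icc] at hd
              exact Nat.pow_le_pow_right (by norm_num) (Nat.div_le_div_left hd.1 (by norm_num))
          _ = (n - 2) * 2 ^ (n / 3) := by rw [Finset.sum_const, Nat.card_Icc, smul_eq_mul, show n+1-3 = n-2 by omega]
      have : (n - 2) * 2 ^ (n/3) ≤ n * 2 ^ (n/3) := Nat.mul_le_mul_right _ (by omega)
      omega
  omega

lemma sum_D (N : ℕ) : ∑ n ∈ Finset.Icc 1 N, D n = ∑ d ∈ Finset.Icc 1 N, (N / d) * f d := by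
  have h1 : ∀ n ∈ Finset.Icc 1 N, D n = ∑ d ∈ (Finset.Icc 1 N).filter (· ∣ n), f d := by
    intro n hn
    rw [Finset.mem_Icc] at hn
    unfold D
    congr 1
    ext d
    simp only [Nat.mem_divisors, Finset.mem_filter, Finset.mem_Icc]
    constructor
    · rintro ⟨hd, hn0⟩
      have h1 : 1 ≤ d := Nat.pos_of_dvd_of_pos hd (by omega)
      have h2 : d ≤ n := Nat.le_of_dvd (by omega) hd
      exact ⟨⟨h1, le_trans h2 hn.2⟩, hd⟩
    · rintro ⟨-, hd⟩
      exact ⟨hd, by omega⟩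
  rw [Finset.sum_congr rfl h1]
  simp only [Finset.sum_filter]
  rw [Finset.sum_comm]
  apply Finset.sum_congr rfl
  intro d _
  rw [← Finset.sum_filter, Finset.sum_const, ← card_mult N d, smul_eq_mul]

lemma geom_Ioc (a b : ℕ) (h : a ≤ b) :
    ∑ d ∈ Finset.Ioc a b, (2:ℝ)^d = 2^(b+1) - 2^(a+1) := by
  induction b, h using Nat.le_induction with
  | base => simp
  | succ b hb ih =>
    rw [Finset.sum_Ioc_succ_top (by omega), ih]
    ring

lemma G_formula (M : ℕ) :
    ∑ d ∈ Finset.Ioc 0 M, (2:ℝ)^(d/2) = (if Odd M then 4 else 3) * 2^(M/2) - 3 := by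
  induction M with
  | zero => norm_num
  | succ M ih =>
    rw [Finset.sum_Ioc_succ_top (Nat.zero_le _), ih]
    rcases Nat.even_or_odd M with h | h
    · obtain ⟨k, hk⟩ := h
      have h1 : ¬ Odd M := by rw [Nat.not_odd_iff_even]; exact ⟨k, hk⟩
      have h2 : Odd (M+1) := by exact ⟨k, by omega⟩
      have h3 : (M+1)/2 = M/2 := by omega
      rw [if_neg h1, if_pos h2, h3]; ring
    · have h1 : Odd M := h
      obtain ⟨k, hk⟩ := h
      have h2 : ¬ Odd (M+1) := by
        rw [Nat.not_odd_iff_even]; exact ⟨k+1, by omega⟩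
      have h3 : (M+1)/2 = M/2 + 1 := by omega
      rw [if_pos h1, if_neg h2, h3, pow_succ]; ring

lemma pow2_mono {a b : ℕ} (h : a ≤ b) : (2:ℝ)^a ≤ 2^b := by
  apply pow_le_pow_right₀ (by norm_num) h

lemma SN_est (N : ℕ) :
    |(∑ n ∈ Finset.Icc 1 N, (D n : ℝ)) - 2^(N+1)
      + (if Odd N then 2 else 1) * 2^(N/2)| ≤ 64 * (N+2)^2 * 2^(N/3) := by
  have hcast : (∑ n ∈ Finset.Icc 1 N, (D n : ℝ))
      = ∑ d ∈ Finset.Icc 1 N, ((N/d : ℕ) : ℝ) * (f d : ℝ) := by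
    have h := sum_D N
    have : (∑ n ∈ Finset.Icc 1 N, (D n : ℝ))
        = ((∑ n ∈ Finset.Icc 1 N, D n : ℕ) : ℝ) := by push_cast; ring
    rw [this, h]; push_cast; ring
  have f_approx : ∀ d : ℕ, |(f d : ℝ) - (2^d - 2^(d/2))| ≤ d * 2^(d/3) + 1 := by
    intro d
    have h1 : (f d : ℝ) + 2^(d/2) ≤ 2^d := by exact_mod_cast fU d
    have h2 : (2:ℝ)^d ≤ f d + 2^(d/2) + d * 2^(d/3) + 1 := by exact_mod_cast fL d
    rw [abs_le]; constructor <;> linarith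
  -- error between S and T
  have hST : |∑ d ∈ Finset.Icc 1 N, ((N/d:ℕ):ℝ) * (f d : ℝ)
      - ∑ d ∈ Finset.Icc 1 N, ((N/d:ℕ):ℝ) * ((2:ℝ)^d - 2^(d/2))|
      ≤ N^2 * 2^(N/3) + N^2 := by
    rw [← Finset.sum_sub_distrib]
    refine le_trans (Finset.abs_sum_le_sum_abs _ _) ?_
    have hterm : ∀ d ∈ Finset.Icc 1 N,
        |((N/d:ℕ):ℝ) * (f d : ℝ) - ((N/d:ℕ):ℝ) * ((2:ℝ)^d - 2^(d/2))|
        ≤ (N:ℝ) * 2^(N/3) + N := by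
      intro d hd
      rw [mem_Icc] at hd
      rw [← mul_sub, abs_mul, abs_of_nonneg (by positivity : (0:ℝ) ≤ ((N/d:ℕ):ℝ))]
      have e2 : (2:ℝ)^(d/3) ≤ 2^(N/3) := pow2_mono (Nat.div_le_div_right hd.2)
      have e3 : ((N/d:ℕ):ℝ) ≤ N := by exact_mod_cast Nat.div_le_self N d
      have e4 : ((N/d:ℕ):ℝ) * d ≤ N := by exact_mod_cast Nat.div_mul_le_self N d
      have e5 : (0:ℝ) ≤ ((N/d:ℕ):ℝ) := by positivity
      calc ((N/d:ℕ):ℝ) * |(f d : ℝ) - ((2:ℝ)^d - 2^(d/2))|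
          ≤ ((N/d:ℕ):ℝ) * (d * 2^(d/3) + 1) := by
            exact mul_le_mul_of_nonneg_left (f_approx d) e5
        _ = ((N/d:ℕ):ℝ) * d * 2^(d/3) + ((N/d:ℕ):ℝ) := by ring
        _ ≤ (N:ℝ) * 2^(N/3) + N := by
            have : ((N/d:ℕ):ℝ) * d * 2^(d/3) ≤ (N:ℝ) * 2^(N/3) :=
              mul_le_mul e4 e2 (by positivity) (by positivity)
            linarith
    refine le_trans (Finset.sum_le_card_nsmul _ _ _ hterm) ?_
    rw [Nat.card_Icc, Nat.add_sub_cancel, nsmul_eq_mul]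
    have h1 : (1:ℝ) ≤ 2^(N/3) := one_le_pow₀ (by norm_num)
    nlinarith [sq_nonneg (N:ℝ), Nat.cast_nonneg (α := ℝ) N]
  -- A part
  have hA : |∑ d ∈ Finset.Icc 1 N, ((N/d:ℕ):ℝ) * (2:ℝ)^d - (2^(N+1) + 2 * 2^(N/2))|
      ≤ ((N:ℝ)^2 + 4) * 2^(N/3) := by
    have hsplit : ∑ d ∈ Finset.Icc 1 N, ((N/d:ℕ):ℝ) * (2:ℝ)^d
        = ∑ d ∈ Finset.Ioc 0 (N/3), ((N/d:ℕ):ℝ) * (2:ℝ)^d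
          + ∑ d ∈ Finset.Ioc (N/3) (N/2), ((N/d:ℕ):ℝ) * (2:ℝ)^d
          + ∑ d ∈ Finset.Ioc (N/2) N, ((N/d:ℕ):ℝ) * (2:ℝ)^d := by
      rw [show Finset.Icc 1 N = Finset.Ioc 0 N from rfl,
        ← Finset.sum_Ioc_consecutive _ (Nat.zero_le (N/2)) (by omega : N/2 ≤ N),
        ← Finset.sum_Ioc_consecutive _ (Nat.zero_le (N/3)) (by omega : N/3 ≤ N/2)]
    have h3 : ∑ d ∈ Finset.Ioc (N/2) N, ((N/d:ℕ):ℝ) * (2:ℝ)^d = 2^(N+1) - 2^(N/2+1) := by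
      rw [← geom_Ioc _ _ (by omega : N/2 ≤ N)]
      apply Finset.sum_congr rfl
      intro d hd; rw [mem_Ioc] at hd
      rw [show N / d = 1 from Nat.div_eq_of_lt_le (by omega) (by omega)]
      norm_num
    have h4 : ∑ d ∈ Finset.Ioc (N/3) (N/2), ((N/d:ℕ):ℝ) * (2:ℝ)^d
        = 2 * (2^(N/2+1) - 2^(N/3+1)) := by
      rw [← geom_Ioc _ _ (by omega : N/3 ≤ N/2), Finset.mul_sum]
      apply Finset.sum_congr rfl
      intro d hd; rw [mem_Ioc] at hd
      rw [show N / d = 2 from Nat.div_eq_of_lt_le (by omega) (by omega)]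
      push_cast; ring
    have h5 : |∑ d ∈ Finset.Ioc 0 (N/3), ((N/d:ℕ):ℝ) * (2:ℝ)^d| ≤ (N:ℝ)^2 * 2^(N/3) := by
      refine le_trans (Finset.abs_sum_le_sum_abs _ _) ?_
      have hterm : ∀ d ∈ Finset.Ioc 0 (N/3),
          |((N/d:ℕ):ℝ) * (2:ℝ)^d| ≤ (N:ℝ) * 2^(N/3) := by
        intro d hd; rw [mem_Ioc] at hd
        rw [abs_of_nonneg (by positivity)]
        have e3 : ((N/d:ℕ):ℝ) ≤ N := by exact_mod_cast Nat.div_le_self N d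
        have e2 : (2:ℝ)^d ≤ 2^(N/3) := pow2_mono hd.2
        exact mul_le_mul e3 e2 (by positivity) (by positivity)
      refine le_trans (Finset.sum_le_card_nsmul _ _ _ hterm) ?_
      rw [Nat.card_Ioc, Nat.sub_zero, nsmul_eq_mul]
      have e1 : ((N/3 : ℕ):ℝ) ≤ N := by exact_mod_cast Nat.div_le_self N 3
      have e0 : (0:ℝ) ≤ (N:ℝ) * 2^(N/3) := by positivity
      nlinarith [Nat.cast_nonneg (α := ℝ) N]
    rw [hsplit, h3, h4]
    have key : ∀ x : ℝ, x + 2 * (2^(N/2+1) - 2^(N/3+1)) + (2^(N+1) - 2^(N/2+1))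
        - (2^(N+1) + 2 * 2^(N/2)) = x - 4 * 2^(N/3) := by
      intro x
      have p1 : (2:ℝ)^(N/2+1) = 2 * 2^(N/2) := by rw [pow_succ]; ring
      have p2 : (2:ℝ)^(N/3+1) = 2 * 2^(N/3) := by rw [pow_succ]; ring
      rw [p1, p2]; ring
    rw [key]
    refine le_trans (abs_sub _ _) ?_
    rw [abs_of_nonneg (by positivity : (0:ℝ) ≤ 4 * 2^(N/3))]
    linarith [h5]
  -- B part
  have hB : |∑ d ∈ Finset.Icc 1 N, ((N/d:ℕ):ℝ) * (2:ℝ)^(d/2)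
      - (if Odd N then 4 else 3) * 2^(N/2)| ≤ ((N:ℝ)^2 + 4) * 2^(N/3) := by
    have hsplit : ∑ d ∈ Finset.Icc 1 N, ((N/d:ℕ):ℝ) * (2:ℝ)^(d/2)
        = ∑ d ∈ Finset.Ioc 0 (N/2), ((N/d:ℕ):ℝ) * (2:ℝ)^(d/2)
          + ∑ d ∈ Finset.Ioc (N/2) N, ((N/d:ℕ):ℝ) * (2:ℝ)^(d/2) := by
      rw [show Finset.Icc 1 N = Finset.Ioc 0 N from rfl,
        ← Finset.sum_Ioc_consecutive _ (Nat.zero_le (N/2)) (by omega : N/2 ≤ N)]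
    have h3 : ∑ d ∈ Finset.Ioc (N/2) N, ((N/d:ℕ):ℝ) * (2:ℝ)^(d/2)
        = ∑ d ∈ Finset.Ioc (N/2) N, (2:ℝ)^(d/2) := by
      apply Finset.sum_congr rfl
      intro d hd; rw [mem_Ioc] at hd
      rw [show N / d = 1 from Nat.div_eq_of_lt_le (by omega) (by omega)]
      norm_num
    have h4 : ∑ d ∈ Finset.Ioc (N/2) N, (2:ℝ)^(d/2)
        = ((if Odd N then 4 else 3) * 2^(N/2) - 3)
          - ((if Odd (N/2) then 4 else 3) * 2^(N/2/2) - 3) := by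
      rw [← G_formula N, ← G_formula (N/2),
        ← Finset.sum_Ioc_consecutive _ (Nat.zero_le (N/2)) (by omega : N/2 ≤ N)]
      ring
    have h6 : |(if Odd (N/2) then (4:ℝ) else 3) * 2^(N/2/2)| ≤ 4 * 2^(N/3) := by
      rw [abs_of_nonneg (by positivity : (0:ℝ) ≤ (if Odd (N/2) then (4:ℝ) else 3) * 2^(N/2/2))]
      have e1 : (if Odd (N/2) then (4:ℝ) else 3) ≤ 4 := by split <;> norm_num
      have e2 : (2:ℝ)^(N/2/2) ≤ 2^(N/3) := pow2_mono (by omega)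
      exact mul_le_mul e1 e2 (by positivity) (by norm_num)
    have h5 : |∑ d ∈ Finset.Ioc 0 (N/2), ((N/d:ℕ):ℝ) * (2:ℝ)^(d/2)| ≤ (N:ℝ)^2 * 2^(N/3) := by
      refine le_trans (Finset.abs_sum_le_sum_abs _ _) ?_
      have hterm : ∀ d ∈ Finset.Ioc 0 (N/2),
          |((N/d:ℕ):ℝ) * (2:ℝ)^(d/2)| ≤ (N:ℝ) * 2^(N/3) := by
        intro d hd; rw [mem_Ioc] at hd
        rw [abs_of_nonneg (by positivity)]
        have e3 : ((N/d:ℕ):ℝ) ≤ N := by exact_mod_cast Nat.div_le_self N d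
        have e2 : (2:ℝ)^(d/2) ≤ 2^(N/3) := pow2_mono (by omega)
        exact mul_le_mul e3 e2 (by positivity) (by positivity)
      refine le_trans (Finset.sum_le_card_nsmul _ _ _ hterm) ?_
      rw [Nat.card_Ioc, Nat.sub_zero, nsmul_eq_mul]
      have e1 : ((N/2 : ℕ):ℝ) ≤ N := by exact_mod_cast Nat.div_le_self N 2
      nlinarith [Nat.cast_nonneg (α := ℝ) N, (by positivity : (0:ℝ) ≤ (N:ℝ) * 2^(N/3))]
    rw [hsplit, h3, h4]
    have key : ∀ x : ℝ, x + (((if Odd N then (4:ℝ) else 3) * 2^(N/2) - 3)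
        - ((if Odd (N/2) then (4:ℝ) else 3) * 2^(N/2/2) - 3))
        - (if Odd N then (4:ℝ) else 3) * 2^(N/2)
        = x - (if Odd (N/2) then (4:ℝ) else 3) * 2^(N/2/2) := by intro x; ring
    rw [key]
    refine le_trans (abs_sub _ _) ?_
    linarith [h5, h6]
  -- assembly
  have hTsub : ∑ d ∈ Finset.Icc 1 N, ((N/d:ℕ):ℝ) * ((2:ℝ)^d - 2^(d/2))
      = ∑ d ∈ Finset.Icc 1 N, ((N/d:ℕ):ℝ) * (2:ℝ)^d
        - ∑ d ∈ Finset.Icc 1 N, ((N/d:ℕ):ℝ) * (2:ℝ)^(d/2) := by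
    rw [← Finset.sum_sub_distrib]
    apply Finset.sum_congr rfl
    intro d _; ring
  rw [hcast]
  have hw : (if Odd N then (4:ℝ) else 3) = (if Odd N then (2:ℝ) else 1) + 2 := by
    split <;> norm_num
  have h1 : (1:ℝ) ≤ 2^(N/3) := one_le_pow₀ (by norm_num)
  set S := ∑ d ∈ Finset.Icc 1 N, ((N/d:ℕ):ℝ) * (f d : ℝ) with hS
  set A := ∑ d ∈ Finset.Icc 1 N, ((N/d:ℕ):ℝ) * (2:ℝ)^d with hA'
  set B := ∑ d ∈ Finset.Icc 1 N, ((N/d:ℕ):ℝ) * (2:ℝ)^(d/2) with hB'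
  rw [hTsub] at hST
  have expand : S - 2^(N+1) + (if Odd N then (2:ℝ) else 1) * 2^(N/2)
      = (S - (A - B)) + (A - (2^(N+1) + 2 * 2^(N/2)))
        - (B - (if Odd N then (4:ℝ) else 3) * 2^(N/2)) := by
    rw [hw]; ring
  rw [expand]
  have habs := abs_abs (S - (A - B))
  calc |(S - (A - B)) + (A - (2^(N+1) + 2 * 2^(N/2)))
        - (B - (if Odd N then (4:ℝ) else 3) * 2^(N/2))|
      ≤ |S - (A - B)| + |A - (2^(N+1) + 2 * 2^(N/2))|
        + |B - (if Odd N then (4:ℝ) else 3) * 2^(N/2)| := by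
        refine le_trans (abs_sub _ _) ?_
        gcongr
        exact abs_add_le _ _
    _ ≤ ((N:ℝ)^2 * 2^(N/3) + N^2) + ((N:ℝ)^2 + 4) * 2^(N/3) + ((N:ℝ)^2 + 4) * 2^(N/3) := by
        exact add_le_add (add_le_add hST hA) hB
    _ ≤ 64 * (N+2)^2 * 2^(N/3) := by
        have hN : (0:ℝ) ≤ (N:ℝ) := Nat.cast_nonneg N
        nlinarith [sq_nonneg ((N:ℝ)+2), mul_le_mul_of_nonneg_left h1 (sq_nonneg (N:ℝ))]

noncomputable def uu (N : ℕ) : ℝ :=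
  |(∑ n ∈ Finset.Icc 1 N, (D n : ℝ)) - 2 ^ (N + 1)| / (2 : ℝ) ^ ((N : ℝ) / 2)

noncomputable def cc (N : ℕ) : ℝ := if Odd N then Real.sqrt 2 else 1

noncomputable def ee (N : ℕ) : ℝ :=
  64 * (N+2)^2 * (2:ℝ)^(N/3 : ℕ) / (2:ℝ)^((N : ℝ) / 2)

lemma rpow_half (N : ℕ) :
    (2:ℝ) ^ ((N:ℝ)/2) = 2^(N/2 : ℕ) * (if Odd N then Real.sqrt 2 else 1) := by
  rcases Nat.even_or_odd N with ⟨m, hm⟩ | ⟨m, hm⟩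
  · have h1 : ¬ Odd N := by rw [Nat.not_odd_iff_even]; exact ⟨m, hm⟩
    have h2 : ((N:ℝ))/2 = (m:ℕ) := by push_cast; rw [hm]; push_cast; ring
    rw [if_neg h1, h2, Real.rpow_natCast, mul_one]
    congr 1
    omega
  · have h1 : Odd N := ⟨m, hm⟩
    have h2 : ((N:ℝ))/2 = (m:ℕ) + (1/2 : ℝ) := by rw [hm]; push_cast; ring
    rw [if_pos h1, h2, Real.rpow_add (by norm_num), Real.rpow_natCast,
      ← Real.sqrt_eq_rpow]
    congr 2
    omega

lemma cc_mul (N : ℕ) :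
    cc N * (2:ℝ) ^ ((N:ℝ)/2) = (if Odd N then 2 else 1) * 2^(N/2 : ℕ) := by
  rw [rpow_half, cc]
  rcases Nat.even_or_odd N with h | h
  · rw [if_neg (Nat.not_odd_iff_even.2 h), if_neg (Nat.not_odd_iff_even.2 h)]; ring
  · rw [if_pos h, if_pos h]
    have h2 : Real.sqrt 2 * Real.sqrt 2 = 2 := Real.mul_self_sqrt (by norm_num)
    rw [show Real.sqrt 2 * ((2:ℝ) ^ (N/2 : ℕ) * Real.sqrt 2)
      = (Real.sqrt 2 * Real.sqrt 2) * 2^(N/2 : ℕ) from by ring, h2]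

lemma u_close (N : ℕ) : |uu N - cc N| ≤ ee N := by
  have hp : (0:ℝ) < (2:ℝ) ^ ((N:ℝ)/2) := Real.rpow_pos_of_pos (by norm_num) _
  have hcc : cc N = (if Odd N then (2:ℝ) else 1) * 2^(N/2 : ℕ) / (2:ℝ)^((N:ℝ)/2) := by
    rw [← cc_mul]; field_simp
  rw [uu, hcc, ee, div_sub_div_same, abs_div, abs_of_pos hp]
  gcongr
  set X := (∑ n ∈ Finset.Icc 1 N, (D n : ℝ)) - 2 ^ (N + 1) with hX
  set w := (if Odd N then (2:ℝ) else 1) with hw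
  have h0 : (0:ℝ) ≤ w := by rw [hw]; split <;> norm_num
  have habs : |-(w * 2^(N/2:ℕ))| = w * 2^(N/2:ℕ) := by
    rw [abs_neg, abs_of_nonneg (mul_nonneg h0 (by positivity))]
  calc abs (abs X - w * 2^(N/2:ℕ)) = abs (abs X - abs (-(w * 2^(N/2:ℕ)))) := by rw [habs]
    _ ≤ |X - -(w * 2^(N/2:ℕ))| := abs_abs_sub_abs_le_abs_sub _ _
    _ = |X + w * 2^(N/2:ℕ)| := by rw [sub_neg_eq_add]
    _ ≤ 64 * (N+2)^2 * 2^(N/3 : ℕ) := SN_est N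

lemma ee_nonneg (N : ℕ) : 0 ≤ ee N := by
  rw [ee]; positivity

lemma ee_tendsto : Tendsto ee atTop (nhds 0) := by
  set r : ℝ := (2:ℝ)^(-(1/6 : ℝ)) with hr
  have hr0 : 0 < r := Real.rpow_pos_of_pos (by norm_num) _
  have hr1 : r < 1 := Real.rpow_lt_one_of_one_lt_of_neg (by norm_num) (by norm_num)
  have hrabs : |r| < 1 := by rw [abs_of_pos hr0]; exact hr1
  have hbound : ∀ N : ℕ, ee N ≤ 64*(N:ℝ)^2*r^N + 256*(N:ℝ)*r^N + 256*r^N := by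
    intro N
    have key : (2:ℝ)^(N/3 : ℕ) / (2:ℝ)^((N:ℝ)/2) ≤ r^N := by
      rw [← Real.rpow_natCast (2:ℝ) (N/3), ← Real.rpow_sub (by norm_num), hr,
        ← Real.rpow_natCast ((2:ℝ)^(-(1/6:ℝ))) N, ← Real.rpow_mul (by norm_num)]
      apply Real.rpow_le_rpow_of_exponent_le (by norm_num)
      have h1 : ((N/3 : ℕ) : ℝ) ≤ (N:ℝ)/3 := Nat.cast_div_le
      push_cast
      linarith
    have expand : ee N = 64*((N:ℝ)+2)^2 * ((2:ℝ)^(N/3:ℕ) / (2:ℝ)^((N:ℝ)/2)) := by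
      rw [ee]; push_cast; ring
    calc ee N ≤ 64*((N:ℝ)+2)^2 * r^N := by
          rw [expand]; exact mul_le_mul_of_nonneg_left key (by positivity)
      _ = 64*(N:ℝ)^2*r^N + 256*(N:ℝ)*r^N + 256*r^N := by ring
  apply squeeze_zero ee_nonneg hbound
  have h2 := (tendsto_pow_const_mul_const_pow_of_abs_lt_one 2 hrabs).const_mul (64:ℝ)
  have h1 := (tendsto_pow_const_mul_const_pow_of_abs_lt_one 1 hrabs).const_mul (256:ℝ)
  have h0 := (tendsto_pow_const_mul_const_pow_of_abs_lt_one 0 hrabs).const_mul (256:ℝ)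
  have := (h2.add h1).add h0
  simp only [mul_zero, add_zero, pow_one, pow_zero, one_mul] at this
  convert this using 2 with N
  ring

/-- `limsup = √2` and `liminf = 1` for `|∑_{n ≤ N} D(n) - 2^{N+1}| / 2^{N/2}`. -/
theorem limsup_liminf_D_error :
    Filter.limsup
      (fun N : ℕ => |(∑ n ∈ Finset.Icc 1 N, (D n : ℝ)) - 2 ^ (N + 1)| /
        (2 : ℝ) ^ ((N : ℝ) / 2)) Filter.atTop = Real.sqrt 2 ∧
    Filter.liminf
      (fun N : ℕ => |(∑ n ∈ Finset.Icc 1 N, (D n : ℝ)) - 2 ^ (N + 1)| /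
        (2 : ℝ) ^ ((N : ℝ) / 2)) Filter.atTop = 1 := by
  have hfun : (fun N : ℕ => |(∑ n ∈ Finset.Icc 1 N, (D n : ℝ)) - 2 ^ (N + 1)| /
      (2 : ℝ) ^ ((N : ℝ) / 2)) = uu := rfl
  rw [hfun]
  have hsqrt1 : (1:ℝ) ≤ Real.sqrt 2 := by
    rw [show (1:ℝ) = Real.sqrt 1 by simp]
    exact Real.sqrt_le_sqrt (by norm_num)
  have hcle : ∀ N, cc N ≤ Real.sqrt 2 := by
    intro N; rw [cc]; split
    · exact le_refl _
    · exact hsqrt1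
  have hcge : ∀ N, (1:ℝ) ≤ cc N := by
    intro N; rw [cc]; split
    · exact hsqrt1
    · exact le_refl _
  have hu0 : ∀ N, 0 ≤ uu N := by
    intro N; rw [uu]; positivity
  have hub : ∀ N, uu N ≤ cc N + ee N := by
    intro N; have := abs_le.1 (u_close N); linarith [this.2]
  have hlb : ∀ N, cc N - ee N ≤ uu N := by
    intro N; have := abs_le.1 (u_close N); linarith [this.1]
  have hε := ee_tendsto
  have hoddfreq : ∃ᶠ N in atTop, Odd N :=
    Filter.frequently_atTop.2 fun m => ⟨2*m+1, by omega, ⟨m, by ring⟩⟩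
  have hevenfreq : ∃ᶠ N in atTop, Even N :=
    Filter.frequently_atTop.2 fun m => ⟨2*m, by omega, ⟨m, by ring⟩⟩
  have hmemS : ∀ e : ℝ, 0 < e → (∀ᶠ N in atTop, uu N ≤ Real.sqrt 2 + e) := by
    intro e he
    filter_upwards [hε.eventually_lt_const he] with N hN
    calc uu N ≤ cc N + ee N := hub N
      _ ≤ Real.sqrt 2 + e := add_le_add (hcle N) hN.le
  constructor
  · rw [Filter.limsup_eq]
    have hbdd : BddBelow {a : ℝ | ∀ᶠ N in atTop, uu N ≤ a} := by
      refine ⟨0, fun a ha => ?_⟩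
      obtain ⟨N, h1, h2⟩ := (ha.and (Filter.Eventually.of_forall hu0)).exists
      linarith
    apply le_antisymm
    · refine le_of_forall_pos_le_add (fun e he => ?_)
      exact csInf_le hbdd (hmemS e he)
    · refine le_csInf ⟨Real.sqrt 2 + 1, hmemS 1 one_pos⟩ (fun b hb => ?_)
      refine le_of_forall_pos_le_add (fun e he => ?_)
      obtain ⟨N, hodd, heN, hbN⟩ :=
        (hoddfreq.and_eventually ((hε.eventually_lt_const he).and hb)).exists
      have hcN : Real.sqrt 2 = cc N := by rw [cc, if_pos hodd]
      have := hlb N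
      rw [hcN]
      linarith
  · rw [Filter.liminf_eq]
    have hTub : ∀ a ∈ {a : ℝ | ∀ᶠ N in atTop, a ≤ uu N}, a ≤ 1 := by
      intro a ha
      refine le_of_forall_pos_le_add (fun e he => ?_)
      obtain ⟨N, heven, heN, haN⟩ :=
        (hevenfreq.and_eventually ((hε.eventually_lt_const he).and ha)).exists
      have hcN : cc N = 1 := by rw [cc, if_neg (Nat.not_odd_iff_even.2 heven)]
      have := hub N
      rw [hcN] at this
      linarith
    apply le_antisymm
    · exact csSup_le ⟨0, Filter.Eventually.of_forall hu0⟩ hTub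
    · refine le_of_forall_pos_le_add (fun e he => ?_)
      have h1 : (1:ℝ) - e ∈ {a : ℝ | ∀ᶠ N in atTop, a ≤ uu N} := by
        filter_upwards [hε.eventually_lt_const he] with N hN
        have := hlb N
        have := hcge N
        linarith
      have := le_csSup ⟨1, hTub⟩ h1
      linarith
end

section
/- Let X be a nonempty finite set of positive integers and n a positive integer. Then D(X, n) = ∑_{d ∣ n} f((1/d)·X_d), where the sum is over positive divisors d of n. -/
/-- `fSet X` is the number of nonempty relatively prime subsets of `X`. -/
def fSet (X : Finset ℕ) : ℕ :=
  (X.powerset.filter fun A => A.Nonempty ∧ A.gcd id = 1).card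

/-- `DSet X n` is the number of nonempty subsets `A` of `X` with `gcd(A) ∣ n`. -/
def DSet (X : Finset ℕ) (n : ℕ) : ℕ :=
  (X.powerset.filter fun A => A.Nonempty ∧ A.gcd id ∣ n).card

/-!
Sort the subsets `A` counted by `D(X, n)` by `d = gcd(A)`, a divisor of `n`. Those with gcd
exactly `d` lie in `X_d`, and `A ↦ (1/d)·A` is a bijection from them onto the relatively prime
subsets of `(1/d)·X_d`, with inverse `B ↦ d·B`.
-/

open Finset

lemma Finset.gcd_image_mul_right (d : ℕ) (B : Finset ℕ) :
    (B.image (· * d)).gcd id = B.gcd id * d := by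
  rw [gcd_image, Function.id_comp, gcd_mul_right, normalize_eq]
  rfl

lemma Finset.image_mul_image_div {d : ℕ} {A : Finset ℕ} (h : ∀ a ∈ A, d ∣ a) :
    (A.image (· / d)).image (· * d) = A := by
  rw [image_image]
  exact (image_congr fun a ha => Nat.div_mul_cancel (h a ha)).trans image_id

lemma card_filter_powerset_image_mul_gcd_eq {d : ℕ} (hd : 0 < d) (Y : Finset ℕ) :
    #{A ∈ (Y.image (· * d)).powerset | A.Nonempty ∧ A.gcd id = d} = fSet Y := by
  have hinj : Function.Injective (image (· * d)) :=
    image_injective (mul_left_injective₀ hd.ne')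
  rw [powerset_image, filter_image, card_image_of_injective _ hinj, fSet]
  congr 1
  refine filter_congr fun B _ => ?_
  simp only [image_nonempty, gcd_image_mul_right]
  rw [Nat.mul_eq_right hd.ne']

lemma filter_powerset_gcd_eq (X : Finset ℕ) (d : ℕ) :
    {A ∈ X.powerset | A.Nonempty ∧ A.gcd id = d} =
      {A ∈ (X.filter fun x => d ∣ x).powerset | A.Nonempty ∧ A.gcd id = d} := by
  ext A
  simp only [mem_filter, mem_powerset, and_congr_left_iff]
  rintro ⟨-, rfl⟩
  exact ⟨fun hAX a ha => mem_filter.2 ⟨hAX ha, gcd_dvd ha⟩, fun h => h.trans (filter_subset _ _)⟩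

lemma card_filter_powerset_gcd_eq {d : ℕ} (hd : 0 < d) (X : Finset ℕ) :
    #{A ∈ X.powerset | A.Nonempty ∧ A.gcd id = d} =
      fSet ((X.filter fun x => d ∣ x).image (· / d)) := by
  rw [filter_powerset_gcd_eq, ← card_filter_powerset_image_mul_gcd_eq hd,
    image_mul_image_div fun a ha => (mem_filter.1 ha).2]

theorem DSet_eq_sum_general (X : Finset ℕ) (n : ℕ) (hn : 0 < n) :
    DSet X n = ∑ d ∈ n.divisors, fSet ((X.filter fun x => d ∣ x).image (· / d)) := by
  have hfiber : ∀ A ∈ {A ∈ X.powerset | A.Nonempty ∧ A.gcd id ∣ n}, A.gcd id ∈ n.divisors :=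
    fun A hA => Nat.mem_divisors.2 ⟨(mem_filter.1 hA).2.2, hn.ne'⟩
  rw [DSet, card_eq_sum_card_fiberwise hfiber]
  refine sum_congr rfl fun d hd => ?_
  rw [filter_filter, ← card_filter_powerset_gcd_eq (Nat.pos_of_mem_divisors hd)]
  congr 1
  refine filter_congr fun A _ => ?_
  constructor
  · rintro ⟨⟨hne, -⟩, hgcd⟩; exact ⟨hne, hgcd⟩
  · rintro ⟨hne, rfl⟩; exact ⟨⟨hne, Nat.dvd_of_mem_divisors hd⟩, rfl⟩

/-- For a nonempty finite set `X` of positive integers and a positive integer `n`,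
`D(X, n) = ∑_{d ∣ n} f((1/d) X_d)`, where `X_d = {x ∈ X : d ∣ x}`. -/
theorem DSet_eq_sum (X : Finset ℕ) (hX : X.Nonempty) (hpos : ∀ x ∈ X, 0 < x)
    (n : ℕ) (hn : 0 < n) :
    DSet X n = ∑ d ∈ n.divisors, fSet ((X.filter fun x => d ∣ x).image (· / d)) :=
  DSet_eq_sum_general X n hn
end
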